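/- For the symmetric/asymmetric encryption derivability relation, the absorption property holds: let σ be a substitution mapping a list x⃗ of pairwise distinct names injectively to a list y⃗ of pairwise distinct names, let Γ be a finite set of messages whose names are disjoint from y⃗, and let Γ' = Γσ. Then for every message M whose names are all contained in the names of Γ, we have Γ ∪ Γ' ⊢ M if and only if Γ ⊢ M. -/
import Mathlib


inductive Msg where
  | name : Nat → Msg
  | pair : Msg → Msg → Msg
  | senc : Msg → Msg → Msg
  | aenc : Msg → Msg → Msg
  | pub  : Msg → Msg
deriving DecidableEq

inductive Deriv : Finset Msg → Msg → Prop where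
  | id {Γ M} : M ∈ Γ → Deriv Γ M
  | pub {Γ K} : Deriv Γ K → Deriv Γ (Msg.pub K)
  | pairL {Γ M N M'} : Msg.pair M N ∈ Γ → Deriv (Γ ∪ {M, N}) M' → Deriv Γ M'
  | pairR {Γ M N} : Deriv Γ M → Deriv Γ N → Deriv Γ (Msg.pair M N)
  | sencL {Γ M K N} : Msg.senc M K ∈ Γ → Deriv Γ K → Deriv (Γ ∪ {M, K}) N → Deriv Γ N
  | sencR {Γ M K} : Deriv Γ M → Deriv Γ K → Deriv Γ (Msg.senc M K)
  | aencL {Γ M K N} : Msg.aenc M (Msg.pub K) ∈ Γ → Deriv Γ K → Deriv (Γ ∪ {M, K}) N → Deriv Γ N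
  | aencR {Γ M N} : Deriv Γ M → Deriv Γ N → Deriv Γ (Msg.aenc M N)

def Msg.names : Msg → Finset Nat
  | .name a => {a}
  | .pair M N => M.names ∪ N.names
  | .senc M N => M.names ∪ N.names
  | .aenc M N => M.names ∪ N.names
  | .pub M => M.names

def Msg.rename (σ : Nat → Nat) : Msg → Msg
  | .name a => .name (σ a)
  | .pair M N => .pair (M.rename σ) (N.rename σ)
  | .senc M N => .senc (M.rename σ) (N.rename σ)
  | .aenc M N => .aenc (M.rename σ) (N.rename σ)
  | .pub M => .pub (M.rename σ)

/-- The set of names occurring in a finite set of messages. -/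
def knamesOf (Γ : Finset Msg) : Finset Nat := Γ.biUnion Msg.names

theorem Deriv.weaken : ∀ {Γ Γ' : Finset Msg} {M : Msg}, Deriv Γ M → Γ ⊆ Γ' → Deriv Γ' M := by
  intro Γ Γ' M h
  induction h generalizing Γ' with
  | id hmem => exact fun sub => .id (sub hmem)
  | pub _ ih => exact fun sub => .pub (ih sub)
  | pairL hmem _ ih =>
      exact fun sub => .pairL (sub hmem) (ih (Finset.union_subset_union sub (Finset.Subset.refl _)))
  | pairR _ _ ih1 ih2 => exact fun sub => .pairR (ih1 sub) (ih2 sub)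
  | sencL hmem _ _ ihK ihN =>
      exact fun sub => .sencL (sub hmem) (ihK sub) (ihN (Finset.union_subset_union sub (Finset.Subset.refl _)))
  | sencR _ _ ih1 ih2 => exact fun sub => .sencR (ih1 sub) (ih2 sub)
  | aencL hmem _ _ ihK ihN =>
      exact fun sub => .aencL (sub hmem) (ihK sub) (ihN (Finset.union_subset_union sub (Finset.Subset.refl _)))
  | aencR _ _ ih1 ih2 => exact fun sub => .aencR (ih1 sub) (ih2 sub)

theorem Deriv.rename {Γ : Finset Msg} {M : Msg} (τ : Nat → Nat) (h : Deriv Γ M) :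
    Deriv (Γ.image (Msg.rename τ)) (M.rename τ) := by
  induction h with
  | id hmem => exact .id (Finset.mem_image_of_mem _ hmem)
  | pub _ ih => exact .pub ih
  | pairL hmem _ ih =>
      refine .pairL (Finset.mem_image_of_mem (Msg.rename τ) hmem) ?_
      simpa [Finset.image_union, Msg.rename] using ih
  | pairR _ _ ih1 ih2 => exact .pairR ih1 ih2
  | sencL hmem _ _ ihK ihN =>
      refine .sencL (M := _) (K := _) (Finset.mem_image_of_mem (Msg.rename τ) hmem) ihK ?_
      simpa [Finset.image_union, Msg.rename] using ihN
  | sencR _ _ ih1 ih2 => exact .sencR ih1 ih2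
  | aencL hmem _ _ ihK ihN =>
      refine .aencL (M := _) (K := _) (Finset.mem_image_of_mem (Msg.rename τ) hmem) ihK ?_
      simpa [Finset.image_union, Msg.rename] using ihN
  | aencR _ _ ih1 ih2 => exact .aencR ih1 ih2

theorem Msg.rename_id {τ : Nat → Nat} : ∀ {M : Msg}, (∀ a ∈ M.names, τ a = a) → M.rename τ = M := by
  intro M
  induction M with
  | name a => intro h; simp [Msg.rename, h a (by simp [Msg.names])]
  | pair M N ih1 ih2 =>
      intro h
      simp only [Msg.names, Finset.mem_union] at h
      simp [Msg.rename, ih1 (fun a ha => h a (Or.inl ha)), ih2 (fun a ha => h a (Or.inr ha))]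
  | senc M N ih1 ih2 =>
      intro h
      simp only [Msg.names, Finset.mem_union] at h
      simp [Msg.rename, ih1 (fun a ha => h a (Or.inl ha)), ih2 (fun a ha => h a (Or.inr ha))]
  | aenc M N ih1 ih2 =>
      intro h
      simp only [Msg.names, Finset.mem_union] at h
      simp [Msg.rename, ih1 (fun a ha => h a (Or.inl ha)), ih2 (fun a ha => h a (Or.inr ha))]
  | pub M ih => intro h; simp [Msg.rename, ih (fun a ha => h a (by simpa [Msg.names] using ha))]

theorem Msg.rename_rename {σ τ : Nat → Nat} :
    ∀ {M : Msg}, (∀ a ∈ M.names, τ (σ a) = a) → (M.rename σ).rename τ = M := by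
  intro M
  induction M with
  | name a => intro h; simp [Msg.rename, h a (by simp [Msg.names])]
  | pair M N ih1 ih2 =>
      intro h
      simp only [Msg.names, Finset.mem_union] at h
      simp [Msg.rename, ih1 (fun a ha => h a (Or.inl ha)), ih2 (fun a ha => h a (Or.inr ha))]
  | senc M N ih1 ih2 =>
      intro h
      simp only [Msg.names, Finset.mem_union] at h
      simp [Msg.rename, ih1 (fun a ha => h a (Or.inl ha)), ih2 (fun a ha => h a (Or.inr ha))]
  | aenc M N ih1 ih2 =>
      intro h
      simp only [Msg.names, Finset.mem_union] at h
      simp [Msg.rename, ih1 (fun a ha => h a (Or.inl ha)), ih2 (fun a ha => h a (Or.inr ha))]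
  | pub M ih => intro h; simp [Msg.rename, ih (fun a ha => h a (by simpa [Msg.names] using ha))]


/-- Absorption for the (a)symmetric encryption intruder model:
adding a renamed-apart copy of the knowledge does not increase derivability
of messages whose names are already among the names of the original knowledge. -/
theorem Deriv.absorption (Γ : Finset Msg) (X : Finset Nat) (σ : Nat → Nat)
    (hmove : ∀ a, σ a ≠ a → a ∈ X)
    (hinj : Set.InjOn σ (X : Set Nat))
    (hfresh : ∀ a ∈ X, σ a ∉ knamesOf Γ)
    (M : Msg) (hM : M.names ⊆ knamesOf Γ) :
    Deriv (Γ ∪ Γ.image (Msg.rename σ)) M ↔ Deriv Γ M := by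
  classical
  constructor
  · intro h
    set τ : Nat → Nat := fun b => if hb : ∃ a, a ∈ knamesOf Γ ∧ a ∈ X ∧ σ a = b then hb.choose else b with hτdef
    have hτfix : ∀ b ∈ knamesOf Γ, τ b = b := by
      intro b hb
      simp only [hτdef]
      rw [dif_neg]
      rintro ⟨a, haΓ, haX, rfl⟩
      exact hfresh a haX hb
    have hτσ : ∀ a ∈ knamesOf Γ, τ (σ a) = a := by
      intro a ha
      by_cases haX : a ∈ X
      · have hex : ∃ a', a' ∈ knamesOf Γ ∧ a' ∈ X ∧ σ a' = σ a := ⟨a, ha, haX, rfl⟩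
        simp only [hτdef]
        rw [dif_pos hex]
        obtain ⟨h1, h2, h3⟩ := hex.choose_spec
        exact hinj h2 haX h3
      · have hfa : σ a = a := by
          by_contra hne
          exact haX (hmove a hne)
        rw [hfa]
        exact hτfix a ha
    have hnames : ∀ N ∈ Γ, N.names ⊆ knamesOf Γ := by
      intro N hN a ha
      exact Finset.mem_biUnion.2 ⟨N, hN, ha⟩
    have h2 := h.rename τ
    have himg : (Γ ∪ Γ.image (Msg.rename σ)).image (Msg.rename τ) = Γ := by
      rw [Finset.image_union, Finset.image_image]
      have e1 : Γ.image (Msg.rename τ) = Γ := by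
        have := Finset.image_congr (f := Msg.rename τ) (g := fun N => N) (s := Γ)
          (fun N hN => Msg.rename_id (fun a ha => hτfix a (hnames N hN ha)))
        simpa using this
      have e2 : Γ.image (Msg.rename τ ∘ Msg.rename σ) = Γ := by
        have := Finset.image_congr (f := Msg.rename τ ∘ Msg.rename σ) (g := fun N => N) (s := Γ)
          (fun N hN => Msg.rename_rename (fun a ha => hτσ a (hnames N hN ha)))
        simpa using this
      rw [e1, e2, Finset.union_self]
    have hMfix : M.rename τ = M := Msg.rename_id (fun a ha => hτfix a (hM ha))
    rw [himg, hMfix] at h2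
    exact h2
  · intro h
    exact h.weaken Finset.subset_union_left
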